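/- Let S be a finite state set, s₀ ∈ S, A, B ⊆ S, k ∈ ℕ, P a transition matrix over S, ε ≥ 0, and T ⊆ S × S. Then there exists a worst-case attack: a matrix P* ∈ PS_{ε,T}(P) such that u^{P*}_k s₀ ≤ u^{P'}_k s₀ for all P' ∈ PS_{ε,T}(P). -/

import Mathlib

attribute [local instance] Classical.propDecidable

/-- A transition matrix over a finite state set `S`. -/
def IsTransMat {S : Type*} [Fintype S] (P : S → S → ℝ) : Prop :=
  (∀ s s' : S, 0 ≤ P s s' ∧ P s s' ≤ 1) ∧ (∀ s : S, ∑ s' : S, P s s' = 1)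

/-- Entrywise max distance between two matrices. -/
noncomputable def maxDist {S : Type*} [Fintype S] (P P' : S → S → ℝ) : ℝ :=
  sSup (Set.range fun p : S × S => |P p.1 p.2 - P' p.1 p.2|)

/-- The ε,max-bounded selected-transitions perturbation set. -/
def PertSet {S : Type*} [Fintype S] (P : S → S → ℝ) (ε : ℝ) (T : Set (S × S)) :
    Set (S → S → ℝ) :=
  {P' | IsTransMat P' ∧ maxDist P P' ≤ ε ∧ ∀ s s' : S, (s, s') ∉ T → P' s s' = P s s'}

/-- Bounded-until satisfaction probabilities `u^P_k`. -/
noncomputable def u {S : Type*} [Fintype S] (A B : Set S) (P : S → S → ℝ) : ℕ → S → ℝ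
  | 0 => fun s => if s ∈ B then 1 else 0
  | k + 1 => fun s =>
      if s ∈ B then 1
      else if s ∈ A then ∑ s' : S, P s s' * u A B P k s' else 0

/-- Adversarial robustness of `P` w.r.t. a perturbation set `PS`,
the property `A U^{≤k} B`, initial state `s₀`, and `δ`. -/
def Robust {S : Type*} [Fintype S] (P : S → S → ℝ) (PS : Set (S → S → ℝ))
    (A B : Set S) (k : ℕ) (s₀ : S) (δ : ℝ) : Prop :=
  ∀ P' ∈ PS, u A B P' k s₀ ≥ u A B P k s₀ - δ

/-!
The perturbation set is a closed subset of the compact cube `[0,1]^(S × S)`, hence compact, and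
it contains `P` itself. The satisfaction probability `u^{P'}_k s₀` is a polynomial in the
entries of `P'`, hence continuous, so it attains its minimum on the perturbation set.
-/

open Set

section
variable {S : Type*} [Fintype S]

lemma continuous_u (A B : Set S) (k : ℕ) (s : S) :
    Continuous fun P : S → S → ℝ => u A B P k s := by
  induction k generalizing s with
  | zero => exact continuous_const
  | succ k ih =>
    simp only [u]
    split_ifs
    · exact continuous_const
    · exact continuous_finsetSum _ fun s' _ => (continuous_apply_apply s s').mul (ih s')
    · exact continuous_const

lemma isCompact_setOf_isTransMat : IsCompact {P : S → S → ℝ | IsTransMat P} := by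
  refine (isCompact_univ_pi fun _ => isCompact_univ_pi fun _ =>
    isCompact_Icc (a := (0 : ℝ)) (b := 1)).of_isClosed_subset ?_ ?_
  · simp only [IsTransMat, ofPred_and, ofPred_forall]
    exact (isClosed_iInter fun s => isClosed_iInter fun s' =>
        (isClosed_le continuous_const (continuous_apply_apply s s')).inter
          (isClosed_le (continuous_apply_apply s s') continuous_const)).inter
      (isClosed_iInter fun s => isClosed_eq
        (continuous_finsetSum _ fun s' _ => continuous_apply_apply s s') continuous_const)
  · intro P hP s _ s' _
    exact hP.1 s s'

lemma maxDist_le_iff (P P' : S → S → ℝ) {ε : ℝ} (hε : 0 ≤ ε) :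
    maxDist P P' ≤ ε ↔ ∀ p : S × S, |P p.1 p.2 - P' p.1 p.2| ≤ ε := by
  rcases isEmpty_or_nonempty (S × S) with h | h
  · -- for empty `S` the distance is the junk value `sSup ∅ = 0`, whence `0 ≤ ε`
    simp [maxDist, range_eq_empty, Real.sSup_empty, hε]
  · rw [maxDist, csSup_le_iff (finite_range _).bddAbove (range_nonempty _), forall_mem_range]

lemma isClosed_setOf_maxDist_le (P : S → S → ℝ) {ε : ℝ} (hε : 0 ≤ ε) :
    IsClosed {P' | maxDist P P' ≤ ε} := by
  simp only [maxDist_le_iff P _ hε, ofPred_forall]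
  exact isClosed_iInter fun p => isClosed_le
    (continuous_const.sub (continuous_apply_apply p.1 p.2)).abs continuous_const

lemma isCompact_pertSet (P : S → S → ℝ) {ε : ℝ} (hε : 0 ≤ ε) (T : Set (S × S)) :
    IsCompact (PertSet P ε T) := by
  have hfixed : IsClosed {P' : S → S → ℝ | ∀ s s', (s, s') ∉ T → P' s s' = P s s'} := by
    simp only [ofPred_forall]
    exact isClosed_iInter fun s => isClosed_iInter fun s' => isClosed_iInter fun _ =>
      isClosed_eq (continuous_apply_apply s s') continuous_const
  exact isCompact_setOf_isTransMat.inter_right ((isClosed_setOf_maxDist_le P hε).inter hfixed)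

lemma self_mem_pertSet {P : S → S → ℝ} (hP : IsTransMat P) {ε : ℝ} (hε : 0 ≤ ε)
    (T : Set (S × S)) : P ∈ PertSet P ε T :=
  ⟨hP, (maxDist_le_iff P P hε).2 fun _ => by simpa using hε, fun _ _ _ => rfl⟩

end

/-- a worst-case attack exists in the ε,max-bounded
selected-transitions perturbation set. -/
theorem stmt_10 {S : Type*} [Fintype S] (s₀ : S) (A B : Set S) (k : ℕ)
    (P : S → S → ℝ) (hP : IsTransMat P) (ε : ℝ) (hε : 0 ≤ ε) (T : Set (S × S)) :
    ∃ Pstar ∈ PertSet P ε T, ∀ P' ∈ PertSet P ε T,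
      u A B Pstar k s₀ ≤ u A B P' k s₀ := by
  obtain ⟨Pstar, hmem, hmin⟩ := (isCompact_pertSet P hε T).exists_isMinOn
    ⟨P, self_mem_pertSet hP hε T⟩ (continuous_u A B k s₀).continuousOn
  exact ⟨Pstar, hmem, fun P' hP' => hmin hP'⟩
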